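/- arXiv:2005.10444 — 2 statements merged into one kernel-verified Lean document; each statement's English description precedes it below -/
import Mathlib

section
/- Let f : C × C → ℝ satisfy the Lipschitz-type condition with constants γ₁, γ₂ > 0. Define a sequence λ : ℕ → ℝ with λ₀ > 0 and λ_{n+1} = min{λ_n, μ(d(x_n,y_n)² + d(x_{n+1},y_n)²) / (2 max{f(x_n,x_{n+1}) - f(x_n,y_n) - f(y_n,x_{n+1}), 0})} for some μ ∈ (0,1) and sequences x_n, y_n in C (with the convention a/0 = +∞, so λ_{n+1} = λ_n when the denominator is 0). Then for all n, λ_n ≥ min{λ₀, μ/(2 max{γ₁, γ₂})}; in particular, λ is non-increasing and bounded below by a positive constant, hence converges to some λ > 0. -/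
open Filter

/-!
Each step either keeps `λₙ` or replaces it by `μ sₙ / (2 aₙ)`, where `aₙ > 0` is the gap
`f(xₙ,xₙ₊₁) - f(xₙ,yₙ) - f(yₙ,xₙ₊₁)` and `sₙ = d(xₙ,yₙ)² + d(xₙ₊₁,yₙ)²`. The Lipschitz-type
condition at the triple `(xₙ, yₙ, xₙ₊₁)` gives `aₙ ≤ max γ₁ γ₂ · sₙ`, so every such quotient is at
least `μ / (2 max γ₁ γ₂)`. Hence the sequence never drops below `min λ₀ (μ / (2 max γ₁ γ₂))`, and
being non-increasing it converges to its infimum, which is at least this positive bound.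
-/

def IsLipschitzTypeOn {X : Type*} [PseudoMetricSpace X] (C : Set X) (f : X → X → ℝ)
    (γ₁ γ₂ : ℝ) : Prop :=
  ∀ x ∈ C, ∀ y ∈ C, ∀ z ∈ C, f x y + f y z ≥ f x z - γ₁ * dist x y ^ 2 - γ₂ * dist y z ^ 2

theorem IsLipschitzTypeOn.sub_le_max_mul {X : Type*} [PseudoMetricSpace X] {C : Set X}
    {f : X → X → ℝ} {γ₁ γ₂ : ℝ} (hf : IsLipschitzTypeOn C f γ₁ γ₂) {x y z : X}
    (hx : x ∈ C) (hy : y ∈ C) (hz : z ∈ C) :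
    f x z - f x y - f y z ≤ max γ₁ γ₂ * (dist x y ^ 2 + dist z y ^ 2) := by
  have h := hf x hx y hy z hz
  rw [dist_comm y z] at h
  calc f x z - f x y - f y z ≤ γ₁ * dist x y ^ 2 + γ₂ * dist z y ^ 2 := by linarith
    _ ≤ max γ₁ γ₂ * dist x y ^ 2 + max γ₁ γ₂ * dist z y ^ 2 := by
        gcongr
        exacts [le_max_left _ _, le_max_right _ _]
    _ = max γ₁ γ₂ * (dist x y ^ 2 + dist z y ^ 2) := by ring

noncomputable def nextStepsize (μ lam a s : ℝ) : ℝ :=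
  if max a 0 = 0 then lam else min lam (μ * s / (2 * max a 0))

theorem nextStepsize_le (μ lam a s : ℝ) : nextStepsize μ lam a s ≤ lam := by
  unfold nextStepsize
  split_ifs
  exacts [le_rfl, min_le_left _ _]

theorem div_two_mul_le_div_two_mul {μ M a s : ℝ} (hμ : 0 ≤ μ) (ha : 0 < a) (hs : 0 ≤ s)
    (haM : a ≤ M * s) : μ / (2 * M) ≤ μ * s / (2 * a) := by
  have hM : 0 < M := pos_of_mul_pos_left (ha.trans_le haM) hs
  rw [div_le_div_iff₀ (by positivity) (by positivity)]
  nlinarith [mul_le_mul_of_nonneg_left haM hμ]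

theorem le_nextStepsize {μ lam a s M b : ℝ} (hμ : 0 ≤ μ) (hs : 0 ≤ s) (haM : a ≤ M * s)
    (hb : b ≤ lam) (hbM : b ≤ μ / (2 * M)) : b ≤ nextStepsize μ lam a s := by
  unfold nextStepsize
  split_ifs with h
  · exact hb
  · have ha : 0 < a := by
      simpa using lt_of_le_of_ne (le_max_right a 0) (Ne.symm h)
    rw [max_eq_left ha.le]
    exact le_min hb (hbM.trans (div_two_mul_le_div_two_mul hμ ha hs haM))

section StepsizeSequence

variable {μ M : ℝ} {lam a s : ℕ → ℝ}

theorem antitone_of_eq_nextStepsize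
    (hrec : ∀ n, lam (n + 1) = nextStepsize μ (lam n) (a n) (s n)) : Antitone lam :=
  antitone_nat_of_succ_le fun n => (hrec n).trans_le (nextStepsize_le _ _ _ _)

theorem min_le_of_eq_nextStepsize
    (hrec : ∀ n, lam (n + 1) = nextStepsize μ (lam n) (a n) (s n))
    (hμ : 0 ≤ μ) (hs : ∀ n, 0 ≤ s n) (haM : ∀ n, a n ≤ M * s n) (n : ℕ) :
    min (lam 0) (μ / (2 * M)) ≤ lam n := by
  induction n with
  | zero => exact min_le_left _ _
  | succ n ih =>
    rw [hrec n]
    exact le_nextStepsize hμ (hs n) (haM n) ih (min_le_right _ _)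

end StepsizeSequence

theorem exists_pos_tendsto_of_antitone {u : ℕ → ℝ} (hu : Antitone u) {b : ℝ} (hb : 0 < b)
    (hbu : ∀ n, b ≤ u n) : ∃ l : ℝ, 0 < l ∧ Tendsto u atTop (nhds l) :=
  ⟨⨅ n, u n, hb.trans_le (le_ciInf hbu),
    tendsto_atTop_ciInf hu ⟨b, by rintro _ ⟨n, rfl⟩; exact hbu n⟩⟩

theorem stepsize_bounded_below_and_convergent_general
    {X : Type*} [MetricSpace X] (C : Set X) (f : X → X → ℝ)
    (γ₁ γ₂ : ℝ) (hγ₁ : 0 < γ₁)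
    (hL : ∀ x ∈ C, ∀ y ∈ C, ∀ z ∈ C,
      f x y + f y z ≥ f x z - γ₁ * dist x y ^ 2 - γ₂ * dist y z ^ 2)
    (μ : ℝ) (hμ : μ ∈ Set.Ioo (0 : ℝ) 1)
    (x y : ℕ → X) (hx : ∀ n, x n ∈ C) (hy : ∀ n, y n ∈ C)
    (lam : ℕ → ℝ) (hlam0 : 0 < lam 0)
    (hrec : ∀ n,
      lam (n + 1) =
        if max (f (x n) (x (n + 1)) - f (x n) (y n) - f (y n) (x (n + 1))) 0 = 0 then lam n
        else min (lam n)
          (μ * (dist (x n) (y n) ^ 2 + dist (x (n + 1)) (y n) ^ 2) /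
            (2 * max (f (x n) (x (n + 1)) - f (x n) (y n) - f (y n) (x (n + 1))) 0))) :
    (∀ n, lam n ≥ min (lam 0) (μ / (2 * max γ₁ γ₂))) ∧
    (∀ n, lam (n + 1) ≤ lam n) ∧
    (∃ l : ℝ, 0 < l ∧ Tendsto lam atTop (nhds l)) := by
  have hrec' : ∀ n, lam (n + 1) = nextStepsize μ (lam n)
      (f (x n) (x (n + 1)) - f (x n) (y n) - f (y n) (x (n + 1)))
      (dist (x n) (y n) ^ 2 + dist (x (n + 1)) (y n) ^ 2) := hrec
  have hgap n := IsLipschitzTypeOn.sub_le_max_mul hL (hx n) (hy n) (hx (n + 1))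
  have hlb := min_le_of_eq_nextStepsize hrec' hμ.1.le (fun _ => by positivity) hgap
  have hanti := antitone_of_eq_nextStepsize hrec'
  have hM : 0 < max γ₁ γ₂ := lt_max_of_lt_left hγ₁
  have hb : 0 < min (lam 0) (μ / (2 * max γ₁ γ₂)) := lt_min hlam0 (div_pos hμ.1 (by positivity))
  exact ⟨hlb, fun n => hanti n.le_succ, exists_pos_tendsto_of_antitone hanti hb hlb⟩

/-- The stepsize sequence of the explicit extragradient algorithm is bounded below by a
positive constant, non-increasing, and hence convergent to a positive limit. -/
theorem stepsize_bounded_below_and_convergent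
    {X : Type*} [MetricSpace X] (C : Set X) (f : X → X → ℝ)
    (γ₁ γ₂ : ℝ) (hγ₁ : 0 < γ₁) (hγ₂ : 0 < γ₂)
    (hL : ∀ x ∈ C, ∀ y ∈ C, ∀ z ∈ C,
      f x y + f y z ≥ f x z - γ₁ * dist x y ^ 2 - γ₂ * dist y z ^ 2)
    (μ : ℝ) (hμ : μ ∈ Set.Ioo (0 : ℝ) 1)
    (x y : ℕ → X) (hx : ∀ n, x n ∈ C) (hy : ∀ n, y n ∈ C)
    (lam : ℕ → ℝ) (hlam0 : 0 < lam 0)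
    (hrec : ∀ n,
      lam (n + 1) =
        if max (f (x n) (x (n + 1)) - f (x n) (y n) - f (y n) (x (n + 1))) 0 = 0 then lam n
        else min (lam n)
          (μ * (dist (x n) (y n) ^ 2 + dist (x (n + 1)) (y n) ^ 2) /
            (2 * max (f (x n) (x (n + 1)) - f (x n) (y n) - f (y n) (x (n + 1))) 0))) :
    (∀ n, lam n ≥ min (lam 0) (μ / (2 * max γ₁ γ₂))) ∧
    (∀ n, lam (n + 1) ≤ lam n) ∧
    (∃ l : ℝ, 0 < l ∧ Tendsto lam atTop (nhds l)) :=
  stepsize_bounded_below_and_convergent_general C f γ₁ γ₂ hγ₁ hL μ hμ x y hx hy lam hlam0 hrec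
end

section
/- Let H be a real Hilbert space, C ⊆ H nonempty closed convex, f : C × C → ℝ pseudomonotone with f(x,x)=0, and suppose sequences (x_n), (y_n) in C and positive reals (λ_n), with λ_n → λ > 0 and μ ∈ (0,1), satisfy for every y ∈ C and n: ‖x_{n+1} - y‖² ≤ ‖x_n - y‖² - (1 - μλ_n/λ_{n+1})‖x_n - y_n‖² - (1 - μλ_n/λ_{n+1})‖x_{n+1} - y_n‖² + 2λ_n f(y_n, y). Then for any solution p of the equilibrium problem (f(p,y) ≥ 0 for all y ∈ C), taking y = p gives ‖x_{n+1} - p‖² ≤ ‖x_n - p‖² - (1 - μλ_n/λ_{n+1})(‖x_n - y_n‖² + ‖x_{n+1} - y_n‖²), and for all n large enough (with κ ∈ (0, 1-μ) fixed): ‖x_{n+1} - p‖² ≤ ‖x_n - p‖² - κ(‖x_n - y_n‖² + ‖x_{n+1} - y_n‖²); consequently (‖x_n - p‖) converges, (x_n) is bounded, and ‖x_n - y_n‖ → 0 and ‖x_{n+1} - y_n‖ → 0. -/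
/-!
Testing the key inequality against a solution `p` kills the `f`-term, since pseudomonotonicity
turns `f p (y n) ≥ 0` into `f (y n) p ≤ 0`. As `λ n / λ (n + 1) → 1`, the coefficient
`1 - μ λ n / λ (n + 1)` eventually exceeds `κ`, so `‖x n - p‖²` is eventually decreasing
with decrements at least `κ (‖x n - y n‖² + ‖x (n + 1) - y n‖²)`. A nonnegative, eventually
decreasing sequence converges, and then its decrements tend to zero.
-/

open Filter Topology

theorem tendsto_div_succ_of_tendsto {𝕜 : Type*} [NormedField 𝕜] {u : ℕ → 𝕜} {l : 𝕜}
    (hu : Tendsto u atTop (𝓝 l)) (hl : l ≠ 0) : Tendsto (fun n => u n / u (n + 1)) atTop (𝓝 1) := by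
  have h := hu.div ((tendsto_add_atTop_iff_nat 1).mpr hu) hl
  rwa [div_self hl] at h

theorem exists_tendsto_of_eventually_le_of_nonneg {a : ℕ → ℝ} (ha : ∀ n, 0 ≤ a n)
    (hle : ∀ᶠ n in atTop, a (n + 1) ≤ a n) : ∃ c, Tendsto a atTop (𝓝 c) := by
  obtain ⟨n₀, hn₀⟩ := eventually_atTop.mp hle
  have hanti : Antitone fun k => a (k + n₀) :=
    antitone_nat_of_succ_le fun k => by
      simpa [add_right_comm] using hn₀ (k + n₀) (Nat.le_add_left _ _)
  have hbdd : BddBelow (Set.range fun k => a (k + n₀)) := ⟨0, by rintro _ ⟨k, rfl⟩; exact ha _⟩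
  exact ⟨_, (tendsto_add_atTop_iff_nat n₀).mp (tendsto_atTop_ciInf hanti hbdd)⟩

theorem exists_tendsto_and_tendsto_zero_of_add_mul_le {a b : ℕ → ℝ} {κ : ℝ} (hκ : 0 < κ)
    (ha : ∀ n, 0 ≤ a n) (hb : ∀ n, 0 ≤ b n)
    (hdesc : ∀ᶠ n in atTop, a (n + 1) + κ * b n ≤ a n) :
    (∃ c, Tendsto a atTop (𝓝 c)) ∧ Tendsto b atTop (𝓝 0) := by
  have hle : ∀ᶠ n in atTop, a (n + 1) ≤ a n :=
    hdesc.mono fun n h => by nlinarith [hb n]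
  obtain ⟨c, hc⟩ := exists_tendsto_of_eventually_le_of_nonneg ha hle
  refine ⟨⟨c, hc⟩, ?_⟩
  have hdecr : Tendsto (fun n => (a n - a (n + 1)) / κ) atTop (𝓝 0) := by
    simpa using (hc.sub (hc.comp (tendsto_add_atTop_nat 1))).div_const κ
  refine squeeze_zero' (Eventually.of_forall hb) ?_ hdecr
  filter_upwards [hdesc] with n h
  rw [le_div_iff₀ hκ]
  linarith

theorem tendsto_norm_zero_of_sq_add_sq {E F : Type*} [SeminormedAddCommGroup E]
    [SeminormedAddCommGroup F] {u : ℕ → E} {v : ℕ → F}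
    (h : Tendsto (fun n => ‖u n‖ ^ 2 + ‖v n‖ ^ 2) atTop (𝓝 0)) :
    Tendsto (fun n => ‖u n‖) atTop (𝓝 0) := by
  refine squeeze_zero (fun n => norm_nonneg _) (fun n => ?_) (by simpa using h.sqrt)
  exact Real.le_sqrt_of_sq_le (le_add_of_nonneg_right (sq_nonneg _))

theorem extragradient_key_estimates_general
    {H : Type*} [NormedAddCommGroup H] (C : Set H) (f : H → H → ℝ)
    (hpseudo : ∀ x ∈ C, ∀ y ∈ C, 0 ≤ f x y → f y x ≤ 0)
    (x y : ℕ → H) (hy : ∀ n, y n ∈ C) (lam : ℕ → ℝ) (hlampos : ∀ n, 0 < lam n)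
    (l : ℝ) (hl : 0 < l) (hlamconv : Tendsto lam atTop (nhds l)) (μ : ℝ)
    (hkey : ∀ z ∈ C, ∀ n : ℕ,
      ‖x (n + 1) - z‖ ^ 2 ≤ ‖x n - z‖ ^ 2
        - (1 - μ * lam n / lam (n + 1)) * ‖x n - y n‖ ^ 2
        - (1 - μ * lam n / lam (n + 1)) * ‖x (n + 1) - y n‖ ^ 2
        + 2 * lam n * f (y n) z)
    (p : H) (hp : p ∈ C) (hsol : ∀ z ∈ C, 0 ≤ f p z)
    (κ : ℝ) (hκ : κ ∈ Set.Ioo 0 (1 - μ)) :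
    (∀ n : ℕ, ‖x (n + 1) - p‖ ^ 2 ≤ ‖x n - p‖ ^ 2
        - (1 - μ * lam n / lam (n + 1)) * (‖x n - y n‖ ^ 2 + ‖x (n + 1) - y n‖ ^ 2)) ∧
    (∃ n₀ : ℕ, ∀ n ≥ n₀, ‖x (n + 1) - p‖ ^ 2 ≤ ‖x n - p‖ ^ 2
        - κ * (‖x n - y n‖ ^ 2 + ‖x (n + 1) - y n‖ ^ 2)) ∧
    (∃ c : ℝ, Tendsto (fun n => ‖x n - p‖) atTop (nhds c)) ∧
    (∃ R : ℝ, ∀ n, ‖x n‖ ≤ R) ∧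
    Tendsto (fun n => ‖x n - y n‖) atTop (nhds 0) ∧
    Tendsto (fun n => ‖x (n + 1) - y n‖) atTop (nhds 0) := by
  have fejer : ∀ n : ℕ, ‖x (n + 1) - p‖ ^ 2 ≤ ‖x n - p‖ ^ 2
      - (1 - μ * lam n / lam (n + 1)) * (‖x n - y n‖ ^ 2 + ‖x (n + 1) - y n‖ ^ 2) := fun n => by
    have hfp : f (y n) p ≤ 0 := hpseudo p hp (y n) (hy n) (hsol (y n) (hy n))
    nlinarith [hkey p hp n, hlampos n]
  have hcoeff : ∀ᶠ n in atTop, μ * (lam n / lam (n + 1)) < 1 - κ :=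
    ((tendsto_div_succ_of_tendsto hlamconv hl.ne').const_mul μ).eventually_lt_const
      (by linarith [hκ.2])
  have hdesc : ∀ᶠ n in atTop, ‖x (n + 1) - p‖ ^ 2 + κ * (‖x n - y n‖ ^ 2 + ‖x (n + 1) - y n‖ ^ 2)
      ≤ ‖x n - p‖ ^ 2 := hcoeff.mono fun n hn => by
    rw [← mul_div_assoc] at hn
    nlinarith [fejer n, sq_nonneg ‖x n - y n‖, sq_nonneg ‖x (n + 1) - y n‖]
  obtain ⟨n₀, hn₀⟩ := eventually_atTop.mp hdesc
  obtain ⟨⟨c, hc⟩, hgap⟩ := exists_tendsto_and_tendsto_zero_of_add_mul_le hκ.1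
    (fun n => sq_nonneg ‖x n - p‖) (fun n => by positivity) hdesc
  have hdist : Tendsto (fun n => ‖x n - p‖) atTop (𝓝 (√c)) := by
    simpa [Real.sqrt_sq (norm_nonneg _)] using hc.sqrt
  obtain ⟨M, hM⟩ := hdist.bddAbove_range
  refine ⟨fejer, ⟨n₀, fun n hn => by linarith [hn₀ n hn]⟩, ⟨√c, hdist⟩,
    ⟨M + ‖p‖, fun n => ?_⟩, tendsto_norm_zero_of_sq_add_sq hgap,
    tendsto_norm_zero_of_sq_add_sq (by simpa only [add_comm] using hgap)⟩
  linarith [hM ⟨n, rfl⟩, norm_sub_norm_le (x n) p]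

/-- Key convergence estimates for the extragradient algorithm (Euclidean version of the
main inequality (3.8)): Fejér-type monotonicity with respect to a solution `p`,
convergence of `‖x_n - p‖`, boundedness of `(x_n)`, and vanishing of
`‖x_n - y_n‖` and `‖x_{n+1} - y_n‖`. -/
theorem extragradient_key_estimates
    {H : Type*} [NormedAddCommGroup H] [InnerProductSpace ℝ H] [CompleteSpace H]
    (C : Set H) (hCne : C.Nonempty) (hCclosed : IsClosed C) (hCconv : Convex ℝ C)
    (f : H → H → ℝ) (hf0 : ∀ x ∈ C, f x x = 0)
    (hpseudo : ∀ x ∈ C, ∀ y ∈ C, 0 ≤ f x y → f y x ≤ 0)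
    (x y : ℕ → H) (hx : ∀ n, x n ∈ C) (hy : ∀ n, y n ∈ C)
    (lam : ℕ → ℝ) (hlampos : ∀ n, 0 < lam n) (hlammono : ∀ n, lam (n + 1) ≤ lam n)
    (l : ℝ) (hl : 0 < l) (hlamconv : Tendsto lam atTop (nhds l))
    (μ : ℝ) (hμ : μ ∈ Set.Ioo (0 : ℝ) 1)
    (hkey : ∀ z ∈ C, ∀ n : ℕ,
      ‖x (n + 1) - z‖ ^ 2 ≤ ‖x n - z‖ ^ 2
        - (1 - μ * lam n / lam (n + 1)) * ‖x n - y n‖ ^ 2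
        - (1 - μ * lam n / lam (n + 1)) * ‖x (n + 1) - y n‖ ^ 2
        + 2 * lam n * f (y n) z)
    (p : H) (hp : p ∈ C) (hsol : ∀ z ∈ C, 0 ≤ f p z)
    (κ : ℝ) (hκ : κ ∈ Set.Ioo 0 (1 - μ)) :
    (∀ n : ℕ, ‖x (n + 1) - p‖ ^ 2 ≤ ‖x n - p‖ ^ 2
        - (1 - μ * lam n / lam (n + 1)) * (‖x n - y n‖ ^ 2 + ‖x (n + 1) - y n‖ ^ 2)) ∧
    (∃ n₀ : ℕ, ∀ n ≥ n₀, ‖x (n + 1) - p‖ ^ 2 ≤ ‖x n - p‖ ^ 2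
        - κ * (‖x n - y n‖ ^ 2 + ‖x (n + 1) - y n‖ ^ 2)) ∧
    (∃ c : ℝ, Tendsto (fun n => ‖x n - p‖) atTop (nhds c)) ∧
    (∃ R : ℝ, ∀ n, ‖x n‖ ≤ R) ∧
    Tendsto (fun n => ‖x n - y n‖) atTop (nhds 0) ∧
    Tendsto (fun n => ‖x (n + 1) - y n‖) atTop (nhds 0) :=
  extragradient_key_estimates_general C f hpseudo x y hy lam hlampos l hl hlamconv μ hkey p hp hsol
    κ hκ
end
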